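/- Let $\mathcal{B}$ be a DFA with $n$ states and $\mathcal{A}$ an NFA such that for the universal implication $\iota = (u, \mathcal{A})$, $u \in L(\mathcal{B})$ implies $L(\mathcal{A}) \subseteq L(\mathcal{B})$. Then the formula $\varphi_n^{\mathrm{DFA}} \wedge \varphi_n^W \wedge \varphi_n^\iota$ (the SAT encoding of a consistent DFA with $n$ states for the universal implication $\iota$) is satisfiable; a satisfying valuation is obtained by setting $d_{p,a,q}$ true iff $\delta_\mathcal{B}(p,a) = q$, $f_q$ true iff $q$ is final in $\mathcal{B}$, $x_{v,q}$ true iff $\mathcal{B}$ reaches $q$ on $v$, and $y_{q,q'}$ true iff some word $v$ leads $\mathcal{B}$ to $q$ and $\mathcal{A}$ to $q'$. -/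

import Mathlib

/-- The set of prefixes of words in `W`. -/
def Pref {α : Type*} (W : Set (List α)) : Set (List α) := {u | ∃ v, u ++ v ∈ W}

/-- `φₙᴰᶠᴬ`. -/
def PhiDFA {α : Type*} {n : ℕ} (d : Fin n → α → Fin n → Prop) : Prop :=
  (∀ (p : Fin n) (a : α) (q q' : Fin n), d p a q → d p a q' → q = q') ∧
    ∀ (p : Fin n) (a : α), ∃ q, d p a q

/-- `φₙᵂ`. -/
def PhiW {α : Type*} {n : ℕ} (q0 : Fin n) (W : Set (List α))
    (d : Fin n → α → Fin n → Prop) (x : List α → Fin n → Prop) : Prop :=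
  x [] q0 ∧ (∀ u ∈ Pref W, ∀ q q' : Fin n, x u q → x u q' → q = q') ∧
    ∀ (u : List α) (a : α), u ++ [a] ∈ Pref W →
      ∀ p q, x u p → d p a q → x (u ++ [a]) q

/-- The language of a DFA. -/
def DFALang {Q α : Type*} (δ : Q → α → Q) (q0 : Q) (F : Set Q) : Set (List α) :=
  {w | w.foldl δ q0 ∈ F}

/-- A run of an NFA. -/
def NRun {Q α : Type*} (Δ : Q → α → Q → Prop) : Q → List α → Q → Prop
  | p, [], q => p = q
  | p, a :: w, q => ∃ r, Δ p a r ∧ NRun Δ r w q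

/-- The language of an NFA. -/
def NFALang {Q α : Type*} (Δ : Q → α → Q → Prop) (q0 : Q) (F : Set Q) :
    Set (List α) :=
  {w | ∃ q ∈ F, NRun Δ q0 w q}

/-!
The valuation is read off the DFA `ℬ` itself, so `φₙᴰᶠᴬ` and `φₙᵂ` hold because `ℬ` is a
deterministic total automaton, and the `y`-propagation clauses hold because `y q q'` says that
`(q, q')` is reachable in the product of `ℬ` and `𝒜`. For the last clause: if `ℬ` accepts `u`,
then `L(𝒜) ⊆ L(ℬ)`; a word `v` witnessing `y q q'` with `q'` final in `𝒜` lies in `L(𝒜)`, hence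
`ℬ` accepts `v`, i.e. its state `q` after `v` is final.
-/

theorem NRun.snoc {Q α : Type*} {Δ : Q → α → Q → Prop} {p q r : Q} {v : List α} {a : α}
    (hv : NRun Δ p v q) (ha : Δ q a r) : NRun Δ p (v ++ [a]) r := by
  induction v generalizing p with
  | nil => exact ⟨r, hv ▸ ha, rfl⟩
  | cons b w ih =>
    obtain ⟨s, hs, hw⟩ := hv
    exact ⟨s, hs, ih hw⟩

section Graph

variable {α : Type*} {n : ℕ} (δ : Fin n → α → Fin n)

theorem phiDFA_graph : PhiDFA fun p a q => δ p a = q :=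
  ⟨fun _ _ _ _ h h' => h ▸ h', fun p a => ⟨δ p a, rfl⟩⟩

theorem phiW_foldl (q0 : Fin n) (W : Set (List α)) :
    PhiW q0 W (fun p a q => δ p a = q) (fun v q => v.foldl δ q0 = q) := by
  refine ⟨rfl, fun _ _ _ _ h h' => h ▸ h', ?_⟩
  rintro v a - _ _ rfl rfl
  exact List.foldl_concat ..

end Graph

theorem stmt12_general {α QA : Type*} {n : ℕ} (hn : 0 < n)
    (W : Set (List α)) (u : List α)
    (ΔA : QA → α → QA → Prop) (q0A : QA) (FA : Set QA)
    (δB : Fin n → α → Fin n) (FB : Set (Fin n))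
    (hB : u ∈ DFALang δB ⟨0, hn⟩ FB →
      NFALang ΔA q0A FA ⊆ DFALang δB ⟨0, hn⟩ FB) :
    let d : Fin n → α → Fin n → Prop := fun p a q => δB p a = q
    let f : Fin n → Prop := fun q => q ∈ FB
    let x : List α → Fin n → Prop := fun v q => v.foldl δB ⟨0, hn⟩ = q
    let y : Fin n → QA → Prop := fun q q' =>
      ∃ v : List α, v.foldl δB ⟨0, hn⟩ = q ∧ NRun ΔA q0A v q'
    PhiDFA d ∧ PhiW ⟨0, hn⟩ W d x ∧
      (y ⟨0, hn⟩ q0A ∧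
        (∀ (p q : Fin n) (p' : QA) (a : α) (q' : QA),
          ΔA p' a q' → y p p' → d p a q → y q q') ∧
        ((∃ q, x u q ∧ f q) →
          ∀ (q : Fin n) (q' : QA), q' ∈ FA → y q q' → f q)) := by
  intro d f x y
  refine ⟨phiDFA_graph δB, phiW_foldl δB _ W, ⟨[], rfl, rfl⟩, ?_, ?_⟩
  · rintro p q p' a q' hΔ ⟨v, rfl, hv⟩ rfl
    exact ⟨v ++ [a], List.foldl_concat .., hv.snoc hΔ⟩
  · rintro ⟨_, rfl, hu⟩ q q' hq' ⟨v, rfl, hv⟩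
    exact hB hu ⟨q', hq', hv⟩

/-- Completeness of the encoding for a universal implication `ι = (u, 𝒜)`:
let `ℬ` be a DFA with `n` states (w.l.o.g. with state set `{0, …, n-1}` and
initial state `0`) such that `u ∈ L(ℬ)` implies `L(𝒜) ⊆ L(ℬ)`.  Then the
valuation obtained by setting `d p a q` true iff `δ_ℬ p a = q`, `f q` true iff
`q` is final in `ℬ`, `x v q` true iff `ℬ` reaches `q` on `v`, and `y q q'`
true iff some word leads `ℬ` to `q` and `𝒜` to `q'`, satisfies
`φₙᴰᶠᴬ ∧ φₙᵂ ∧ φₙᶥ`; in particular this formula is satisfiable. -/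
theorem stmt12 {α QA : Type*} [Fintype QA] {n : ℕ} (hn : 0 < n)
    (W : Set (List α)) (hWfin : W.Finite) (u : List α) (huW : u ∈ W)
    (ΔA : QA → α → QA → Prop) (q0A : QA) (FA : Set QA)
    (δB : Fin n → α → Fin n) (FB : Set (Fin n))
    (hB : u ∈ DFALang δB ⟨0, hn⟩ FB →
      NFALang ΔA q0A FA ⊆ DFALang δB ⟨0, hn⟩ FB) :
    let d : Fin n → α → Fin n → Prop := fun p a q => δB p a = q
    let f : Fin n → Prop := fun q => q ∈ FB
    let x : List α → Fin n → Prop := fun v q => v.foldl δB ⟨0, hn⟩ = q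
    let y : Fin n → QA → Prop := fun q q' =>
      ∃ v : List α, v.foldl δB ⟨0, hn⟩ = q ∧ NRun ΔA q0A v q'
    PhiDFA d ∧ PhiW ⟨0, hn⟩ W d x ∧
      (y ⟨0, hn⟩ q0A ∧
        (∀ (p q : Fin n) (p' : QA) (a : α) (q' : QA),
          ΔA p' a q' → y p p' → d p a q → y q q') ∧
        ((∃ q, x u q ∧ f q) →
          ∀ (q : Fin n) (q' : QA), q' ∈ FA → y q q' → f q)) :=
  stmt12_general hn W u ΔA q0A FA δB FB hB
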